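/- arXiv:2412.19122 — 7 statements merged into one kernel-verified Lean document; each statement's English description precedes it below -/
import Mathlib

section
/- Let K be a type, R an equivalence relation (Setoid) on K, and P a finite set of pairs of elements of K. Let R' be the smallest equivalence relation on K containing R and relating a to b for every pair (a,b) ∈ P. Then there exist k ∈ ℕ and pairwise disjoint finite subsets S₁, …, S_k of the quotient K/R, each containing at least two elements, such that for all x, y ∈ K: R' x y holds if and only if R x y holds, or there exists i ≤ k with ⟦x⟧ ∈ S_i and ⟦y⟧ ∈ S_i, where ⟦·⟧ denotes the R-class. -/
/-- Skein invariants of degree 0: enlarging an equivalence relation `R` by a finite set `P`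
of pairs glues together finitely many finite collections of `R`-classes. -/
theorem stmt_1 {K : Type*} (R : Setoid K) (P : Finset (K × K)) :
    ∃ (k : ℕ) (S : Fin k → Finset (Quotient R)),
      (∀ i j : Fin k, i ≠ j → Disjoint (S i) (S j)) ∧
      (∀ i : Fin k, 2 ≤ (S i).card) ∧
      (∀ x y : K,
        Relation.EqvGen (fun a b => R a b ∨ (a, b) ∈ P) x y ↔
          (R x y ∨ ∃ i : Fin k,
            Quotient.mk R x ∈ S i ∧ Quotient.mk R y ∈ S i)) := by
  classical
  set r : Quotient R → Quotient R → Prop :=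
    fun p q => ∃ ab ∈ P, Quotient.mk R ab.1 = p ∧ Quotient.mk R ab.2 = q with hr
  set E : Quotient R → Quotient R → Prop := Relation.EqvGen r with hEdef
  have hErefl : ∀ p, E p p := fun p => Relation.EqvGen.refl p
  have hEsymm : ∀ {p q}, E p q → E q p := fun h => Relation.EqvGen.symm _ _ h
  have hEtrans : ∀ {p q s}, E p q → E q s → E p s :=
    fun h1 h2 => Relation.EqvGen.trans _ _ _ h1 h2
  set T : Finset (Quotient R) :=
    P.image (fun ab => Quotient.mk R ab.1) ∪ P.image (fun ab => Quotient.mk R ab.2) with hT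
  -- support lemma
  have hsupp : ∀ p q, E p q → p = q ∨ (p ∈ T ∧ q ∈ T) := by
    intro p q h
    induction h with
    | rel p q hpq =>
      obtain ⟨ab, hab, h1, h2⟩ := hpq
      exact Or.inr ⟨Finset.mem_union_left _ (Finset.mem_image.2 ⟨ab, hab, h1⟩),
        Finset.mem_union_right _ (Finset.mem_image.2 ⟨ab, hab, h2⟩)⟩
    | refl p => exact Or.inl rfl
    | symm p q _ ih =>
      rcases ih with h | h
      · exact Or.inl h.symm
      · exact Or.inr ⟨h.2, h.1⟩
    | trans p q s _ _ ih1 ih2 =>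
      rcases ih1 with h1 | h1
      · rw [h1]; exact ih2
      · rcases ih2 with h2 | h2
        · exact Or.inr (h2 ▸ h1)
        · exact Or.inr ⟨h1.1, h2.2⟩
  -- translation between EqvGen on K and E on the quotient
  have hfwd : ∀ x y : K, Relation.EqvGen (fun a b => R a b ∨ (a, b) ∈ P) x y →
      E (Quotient.mk R x) (Quotient.mk R y) := by
    intro x y h
    induction h with
    | rel a b hab =>
      rcases hab with hab | hab
      · rw [Quotient.sound hab]; exact hErefl _
      · exact Relation.EqvGen.rel _ _ ⟨(a, b), hab, rfl, rfl⟩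
    | refl a => exact hErefl _
    | symm a b _ ih => exact hEsymm ih
    | trans a b c _ _ ih1 ih2 => exact hEtrans ih1 ih2
  have hbwd : ∀ p q, E p q → ∀ x y : K, Quotient.mk R x = p → Quotient.mk R y = q →
      Relation.EqvGen (fun a b => R a b ∨ (a, b) ∈ P) x y := by
    intro p q h
    induction h with
    | rel p q hpq =>
      intro x y hx hy
      obtain ⟨ab, hab, h1, h2⟩ := hpq
      have hxa : R x ab.1 := Quotient.exact (hx.trans h1.symm)
      have hby : R ab.2 y := Quotient.exact (h2.trans hy.symm)
      exact Relation.EqvGen.trans _ _ _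
        (Relation.EqvGen.trans _ _ _ (Relation.EqvGen.rel _ _ (Or.inl hxa))
          (Relation.EqvGen.rel _ _ (Or.inr hab)))
        (Relation.EqvGen.rel _ _ (Or.inl hby))
    | refl p =>
      intro x y hx hy
      exact Relation.EqvGen.rel _ _ (Or.inl (Quotient.exact (hx.trans hy.symm)))
    | symm p q _ ih =>
      intro x y hx hy
      exact Relation.EqvGen.symm _ _ (ih y x hy hx)
    | trans p q s _ _ ih1 ih2 =>
      intro x y hx hy
      obtain ⟨z, hz⟩ := Quotient.exists_rep q
      exact Relation.EqvGen.trans _ _ _ (ih1 x z hx hz) (ih2 z y hz hy)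
  -- the nontrivial classes
  set C : Finset (Finset (Quotient R)) :=
    (T.image fun p => T.filter (E p)).filter fun s => 2 ≤ s.card with hC
  refine ⟨C.card, fun i => (C.equivFin.symm i : {s // s ∈ C}), ?_, ?_, ?_⟩
  · -- disjointness
    intro i j hij
    set si := C.equivFin.symm i with hsi
    set sj := C.equivFin.symm j with hsj
    rw [Finset.disjoint_left]
    intro a hai haj
    apply hij
    obtain ⟨p, hp, hpeq⟩ := Finset.mem_image.mp (Finset.mem_filter.mp si.2).1
    obtain ⟨q, hq, hqeq⟩ := Finset.mem_image.mp (Finset.mem_filter.mp sj.2).1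
    have hai' : a ∈ (si : Finset (Quotient R)) := hai
    have haj' : a ∈ (sj : Finset (Quotient R)) := haj
    rw [← hpeq] at hai'
    rw [← hqeq] at haj'
    have hpa : E p a := (Finset.mem_filter.mp hai').2
    have hqa : E q a := (Finset.mem_filter.mp haj').2
    have hval : (si : Finset (Quotient R)) = (sj : Finset (Quotient R)) := by
      rw [← hpeq, ← hqeq]
      ext b
      simp only [Finset.mem_filter]
      constructor
      · rintro ⟨hb, hpb⟩; exact ⟨hb, hEtrans hqa (hEtrans (hEsymm hpa) hpb)⟩
      · rintro ⟨hb, hqb⟩; exact ⟨hb, hEtrans hpa (hEtrans (hEsymm hqa) hqb)⟩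
    exact C.equivFin.symm.injective (Subtype.ext hval)
  · -- cardinality
    intro i
    exact (Finset.mem_filter.mp (C.equivFin.symm i).2).2
  · -- main equivalence
    intro x y
    constructor
    · intro h
      have hE := hfwd x y h
      rcases hsupp _ _ hE with heq | ⟨hxT, hyT⟩
      · exact Or.inl (Quotient.exact heq)
      · by_cases hxy : Quotient.mk R x = Quotient.mk R y
        · exact Or.inl (Quotient.exact hxy)
        · right
          set s : Finset (Quotient R) := T.filter (E (Quotient.mk R x)) with hs
          have hsC : s ∈ C := by
            refine Finset.mem_filter.mpr ⟨Finset.mem_image.2 ⟨_, hxT, rfl⟩, ?_⟩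
            have hx_mem : Quotient.mk R x ∈ s := by
              rw [hs, Finset.mem_filter]; exact ⟨hxT, hErefl _⟩
            have hy_mem : Quotient.mk R y ∈ s := by
              rw [hs, Finset.mem_filter]; exact ⟨hyT, hE⟩
            exact Finset.one_lt_card.2 ⟨_, hx_mem, _, hy_mem, hxy⟩
          refine ⟨C.equivFin ⟨s, hsC⟩, ?_, ?_⟩
          · simp only [Equiv.symm_apply_apply]
            rw [hs, Finset.mem_filter]; exact ⟨hxT, hErefl _⟩
          · simp only [Equiv.symm_apply_apply]
            rw [hs, Finset.mem_filter]; exact ⟨hyT, hE⟩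
    · rintro (h | ⟨i, hxi, hyi⟩)
      · exact Relation.EqvGen.rel _ _ (Or.inl h)
      · obtain ⟨p, hp, hpeq⟩ :=
          Finset.mem_image.mp (Finset.mem_filter.mp (C.equivFin.symm i).2).1
        have hxi' : Quotient.mk R x ∈ (C.equivFin.symm i : Finset (Quotient R)) := hxi
        have hyi' : Quotient.mk R y ∈ (C.equivFin.symm i : Finset (Quotient R)) := hyi
        rw [← hpeq] at hxi' hyi'
        exact hbwd _ _ (hEtrans (hEsymm (Finset.mem_filter.mp hxi').2)
          (Finset.mem_filter.mp hyi').2) x y rfl rfl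
end

section
/- Let M be a commutative monoid and r : M → M → Prop a relation such that for all a, b, c ∈ M, r a b implies r (a * c) (b * c). Then the multiplicative congruence on M generated by r coincides, as a binary relation on M, with the equivalence relation EqvGen r generated by r. Consequently the quotient Quotient (EqvGen r) carries a commutative monoid structure for which the natural projection p : M → Quotient (EqvGen r) satisfies p (a * b) = p a * p b for all a, b ∈ M. -/
private lemma eqvgen_mul_right {M : Type*} [CommMonoid M] (r : M → M → Prop)
    (h : ∀ a b c : M, r a b → r (a * c) (b * c)) {a b : M} (c : M)
    (hab : Relation.EqvGen r a b) : Relation.EqvGen r (a * c) (b * c) := by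
  induction hab with
  | rel x y hxy => exact Relation.EqvGen.rel _ _ (h x y c hxy)
  | refl x => exact Relation.EqvGen.refl _
  | symm x y _ ih => exact ih.symm _ _
  | trans x y z _ _ ih1 ih2 => exact ih1.trans _ _ _ ih2

private def eqvCon {M : Type*} [CommMonoid M] (r : M → M → Prop)
    (h : ∀ a b c : M, r a b → r (a * c) (b * c)) : Con M where
  toSetoid := Relation.EqvGen.setoid r
  mul' := by
    intro w x y z hwx hyz
    have h1 : Relation.EqvGen r (w * y) (x * y) := eqvgen_mul_right r h y hwx
    have h2 : Relation.EqvGen r (x * y) (x * z) := by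
      have := eqvgen_mul_right r h x hyz
      simpa [mul_comm] using this
    exact h1.trans _ _ _ h2

/-- For a translation-invariant relation `r` on a commutative monoid, the congruence generated
by `r` coincides with the equivalence relation generated by `r`; consequently the quotient
`Quotient (EqvGen r)` carries a commutative monoid structure making the projection
multiplicative. -/
theorem stmt_4 {M : Type*} [CommMonoid M] (r : M → M → Prop)
    (h : ∀ a b c : M, r a b → r (a * c) (b * c)) :
    (∀ a b : M, conGen r a b ↔ Relation.EqvGen r a b) ∧
    ∃ m : CommMonoid (Quotient (Relation.EqvGen.setoid r)),
      ∀ a b : M,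
        Quotient.mk (Relation.EqvGen.setoid r) (a * b) =
          m.mul (Quotient.mk (Relation.EqvGen.setoid r) a)
                (Quotient.mk (Relation.EqvGen.setoid r) b) := by
  have hle : ∀ a b : M, conGen r a b → Relation.EqvGen r a b := by
    intro a b hab
    exact ((Con.conGen_le (c := eqvCon r h)).mpr (by intro x y hxy; exact Relation.EqvGen.rel x y hxy)) hab
  have hge : ∀ a b : M, Relation.EqvGen r a b → conGen r a b := by
    intro a b hab
    induction hab with
    | rel x y hxy => exact ConGen.Rel.of x y hxy
    | refl x => exact ConGen.Rel.refl x
    | symm x y _ ih => exact ih.symm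
    | trans x y z _ _ ih1 ih2 => exact ih1.trans ih2
  refine ⟨fun a b => ⟨hle a b, hge a b⟩, ?_⟩
  letI : Monoid (eqvCon r h).Quotient := inferInstance
  refine ⟨{ (inferInstance : Monoid (eqvCon r h).Quotient) with
            mul_comm := ?_ }, ?_⟩
  · intro x y
    induction x using Quotient.inductionOn with
    | h a =>
      induction y using Quotient.inductionOn with
      | h b =>
        show ((a * b : M) : (eqvCon r h).Quotient) = ((b * a : M) : (eqvCon r h).Quotient)
        rw [mul_comm]
  · intro a b
    rfl
end

section
/- Every finitely generated commutative monoid is finitely presented: if M is a commutative monoid admitting a finite generating set, then there exist n ∈ ℕ, a surjective monoid homomorphism π from the free commutative monoid on n generators (i.e., Multiplicative (Fin n →₀ ℕ)) onto M, and a finite set S of pairs of elements of the free commutative monoid such that the kernel congruence of π equals the congruence generated by S. -/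
/-! Auxiliary material for Rédei's theorem, via the monoid algebra over `ℤ`. -/

noncomputable section RedeiAux

open Finsupp

variable {N M : Type*} [CommMonoid N] [CommMonoid M]

/-- The binomial `X^a - X^b` in the monoid algebra attached to a pair `(a, b)`. -/
private def redeiBinom (p : N × N) : MonoidAlgebra ℤ N :=
  MonoidAlgebra.single p.1 1 - MonoidAlgebra.single p.2 1

private lemma redeiBinom_def (p : N × N) :
    redeiBinom p = MonoidAlgebra.single p.1 1 - MonoidAlgebra.single p.2 1 := rfl

private lemma redei_mapDomain_apply {G H : Type*} [DecidableEq H] (f : G → H) (p : G →₀ ℤ)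
    (m : H) :
    Finsupp.mapDomain f p m = ∑ x ∈ p.support, if f x = m then p x else 0 := by
  rw [Finsupp.mapDomain, Finsupp.sum_apply]
  rw [Finsupp.sum]
  refine Finset.sum_congr rfl fun x _ => ?_
  rw [Finsupp.single_apply]

/-- Hard half of Lemma A: elements of the kernel of the induced map on monoid algebras lie in
the ideal generated by the binomials of the kernel congruence. -/
private lemma redei_mem_span_aux (π : N →* M) :
    ∀ (m : ℕ) (p : MonoidAlgebra ℤ N), p.coeff.support.card ≤ m →
      Finsupp.mapDomain (⇑π) p.coeff = 0 →
      p ∈ Ideal.span (redeiBinom '' {q : N × N | π q.1 = π q.2}) := by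
  classical
  intro m
  induction m with
  | zero =>
    intro p hc _
    have : p = 0 := by
      rw [← MonoidAlgebra.coeff_eq_zero, ← Finsupp.support_eq_empty]
      exact Finset.card_eq_zero.mp (Nat.le_zero.mp hc)
    simp [this]
  | succ m ih =>
    intro p hc hker
    by_cases hp0 : p = 0
    · simp [hp0]
    obtain ⟨a, ha⟩ := Finsupp.support_nonempty_iff.mpr (mt MonoidAlgebra.coeff_eq_zero.mp hp0)
    set F : Finset N := p.coeff.support.filter (fun x => π x = π a) with hF
    have haF : a ∈ F := Finset.mem_filter.mpr ⟨ha, rfl⟩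
    -- the coefficients over the fiber of `π a` sum to zero
    have hsum : ∑ x ∈ F, p.coeff x = 0 := by
      have h1 : Finsupp.mapDomain (⇑π) p.coeff (π a) = 0 := by rw [hker]; rfl
      rw [redei_mapDomain_apply] at h1
      rw [hF, Finset.sum_filter]
      exact h1
    set δ : MonoidAlgebra ℤ N := ∑ x ∈ F, MonoidAlgebra.single x (p.coeff x) with hδ
    -- δ lies in the span of the binomials
    have hδmem : δ ∈ Ideal.span (redeiBinom '' {q : N × N | π q.1 = π q.2}) := by
      have hδ' : δ = ∑ x ∈ F, MonoidAlgebra.single (1 : N) (p.coeff x)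
          * redeiBinom (x, a) := by
        rw [hδ]
        have : ∀ x ∈ F, MonoidAlgebra.single (1 : N) (p.coeff x) * redeiBinom (x, a)
            = MonoidAlgebra.single x (p.coeff x) - MonoidAlgebra.single a (p.coeff x) := by
          intro x _
          rw [redeiBinom_def, mul_sub, MonoidAlgebra.single_mul_single,
            MonoidAlgebra.single_mul_single]
          simp
        have hz : ∑ x ∈ F, MonoidAlgebra.single a (p.coeff x) = 0 := by
          apply MonoidAlgebra.coeff_injective
          simp only [MonoidAlgebra.coeff_sum, MonoidAlgebra.coeff_single,
            ← Finsupp.single_finset_sum, hsum, Finsupp.single_zero, MonoidAlgebra.coeff_zero]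
        rw [Finset.sum_congr rfl this, Finset.sum_sub_distrib, hz, sub_zero]
      rw [hδ']
      refine Submodule.sum_mem _ fun x hx => ?_
      refine Ideal.mul_mem_left _ _ (Ideal.subset_span ?_)
      exact ⟨(x, a), (Finset.mem_filter.mp hx).2, rfl⟩
    set q : MonoidAlgebra ℤ N := p - δ with hq
    have hδapp : ∀ x : N, δ.coeff x = if x ∈ F then p.coeff x else 0 := by
      intro x
      rw [hδ, MonoidAlgebra.coeff_sum, Finset.sum_apply']
      simp only [MonoidAlgebra.coeff_single]
      rw [Finset.sum_congr rfl (fun y _ => Finsupp.single_apply (a := y) (b := p.coeff y) (a' := x))]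
      exact Finset.sum_ite_eq' F x p.coeff
    have hqsupp : q.coeff.support ⊆ p.coeff.support \ F := by
      intro x hx
      rw [Finsupp.mem_support_iff] at hx
      have hqx : q.coeff x = p.coeff x - δ.coeff x := by rw [hq]; rfl
      by_cases hxF : x ∈ F
      · exfalso; apply hx; rw [hqx, hδapp, if_pos hxF, sub_self]
      · rw [Finset.mem_sdiff]
        refine ⟨?_, hxF⟩
        rw [Finsupp.mem_support_iff]
        intro hpx
        apply hx
        rw [hqx, hδapp, if_neg hxF, hpx, sub_zero]
    have hqcard : q.coeff.support.card ≤ m := by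
      have h1 := Finset.card_le_card hqsupp
      have h2 : (p.coeff.support \ F).card = p.coeff.support.card - F.card :=
        Finset.card_sdiff_of_subset (Finset.filter_subset _ _)
      have h3 : 1 ≤ F.card := Finset.card_pos.mpr ⟨a, haF⟩
      omega
    have hδker : Finsupp.mapDomain (⇑π) δ.coeff = 0 := by
      rw [hδ, MonoidAlgebra.coeff_sum, ← Finsupp.mapDomain.addMonoidHom_apply (⇑π),
        map_sum (Finsupp.mapDomain.addMonoidHom (⇑π))]
      have : ∀ x ∈ F, Finsupp.mapDomain.addMonoidHom (⇑π) (MonoidAlgebra.single x (p.coeff x)).coeff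
          = Finsupp.single (π a) (p.coeff x) := by
        intro x hx
        rw [Finsupp.mapDomain.addMonoidHom_apply, MonoidAlgebra.coeff_single, Finsupp.mapDomain_single,
          (Finset.mem_filter.mp hx).2]
      rw [Finset.sum_congr rfl this, ← Finsupp.single_finset_sum, hsum, Finsupp.single_zero]
    have hqker : Finsupp.mapDomain (⇑π) q.coeff = 0 := by
      rw [hq, MonoidAlgebra.coeff_sub, ← Finsupp.mapDomain.addMonoidHom_apply (⇑π), map_sub,
        Finsupp.mapDomain.addMonoidHom_apply, Finsupp.mapDomain.addMonoidHom_apply,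
        hker, hδker, sub_zero]
    have hqmem := ih q hqcard hqker
    have : p = q + δ := by rw [hq]; ring
    rw [this]
    exact Submodule.add_mem _ hqmem hδmem

/-- Lemma C: if the binomial of `(a, b)` lies in the ideal generated by the binomials of pairs
satisfying `r`, then `a` and `b` are related by the congruence generated by `r`. -/
private lemma redei_conGen_of_mem_span (r : N → N → Prop) {a b : N}
    (h : (MonoidAlgebra.single a 1 - MonoidAlgebra.single b 1 : MonoidAlgebra ℤ N) ∈
      Ideal.span (redeiBinom '' {q : N × N | r q.1 q.2})) :
    conGen r a b := by
  set c := conGen r with hc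
  set ψ := MonoidAlgebra.mapDomainRingHom (N := c.Quotient) ℤ c.mk' with hψ
  have hS : Ideal.span (redeiBinom '' {q : N × N | r q.1 q.2}) ≤ RingHom.ker ψ := by
    rw [Ideal.span_le]
    rintro _ ⟨⟨x, y⟩, hxy, rfl⟩
    have hcxy : c.mk' x = c.mk' y :=
      (Con.eq c).mpr (show c x y from ConGen.Rel.of x y hxy)
    rw [SetLike.mem_coe, RingHom.mem_ker]
    simp only [redeiBinom_def, map_sub, hψ, MonoidAlgebra.mapDomainRingHom_apply,
      ZeroHom.toFun_eq_coe, AddMonoidHom.toZeroHom_coe, AddMonoidHom.coe_coe,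
      AddMonoidHom.toFun_eq_coe, Finsupp.mapDomain.addMonoidHom_apply,
      Finsupp.mapDomain_single, MonoidAlgebra.mapDomain_single, hcxy, sub_self]
  have hmem := hS h
  rw [RingHom.mem_ker] at hmem
  simp only [map_sub, hψ, MonoidAlgebra.mapDomainRingHom_apply,
    ZeroHom.toFun_eq_coe, AddMonoidHom.toZeroHom_coe, AddMonoidHom.coe_coe,
    AddMonoidHom.toFun_eq_coe, Finsupp.mapDomain.addMonoidHom_apply,
    Finsupp.mapDomain_single, MonoidAlgebra.mapDomain_single, sub_eq_zero] at hmem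
  have heq : c.mk' a = c.mk' b :=
    MonoidAlgebra.single_left_injective (one_ne_zero (α := ℤ)) hmem
  exact (Con.eq c).mp heq

/-- Extract a finite generating subset from a generating set of a f.g. submodule. -/
private lemma redei_exists_finset_span {R A : Type*} [CommRing R] [AddCommGroup A] [Module R A]
    (S : Set A) (hfg : (Submodule.span R S).FG) :
    ∃ T : Finset A, ↑T ⊆ S ∧ Submodule.span R (T : Set A) = Submodule.span R S := by
  classical
  obtain ⟨G, hG⟩ := hfg
  have h : ∀ g ∈ G, ∃ T : Finset A, ↑T ⊆ S ∧ g ∈ Submodule.span R (T : Set A) := by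
    intro g hg
    exact Submodule.mem_span_finite_of_mem_span (hG ▸ Submodule.subset_span hg)
  choose T hT1 hT2 using h
  refine ⟨G.attach.biUnion (fun g => T g g.2), ?_, ?_⟩
  · intro x hx
    simp only [Finset.coe_biUnion, Set.mem_iUnion, Finset.mem_coe] at hx
    obtain ⟨g, hg, hxg⟩ := hx
    exact hT1 g g.2 hxg
  · refine le_antisymm (Submodule.span_mono ?_) ?_
    · intro x hx
      simp only [Finset.coe_biUnion, Set.mem_iUnion, Finset.mem_coe] at hx
      obtain ⟨g, hg, hxg⟩ := hx
      exact hT1 g g.2 hxg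
    · rw [← hG, Submodule.span_le]
      intro g hg
      rw [Finset.mem_coe] at hg
      refine Submodule.span_mono ?_ (hT2 g hg)
      intro x hx
      simp only [Finset.coe_biUnion, Set.mem_iUnion, Finset.mem_coe]
      exact ⟨⟨g, hg⟩, Finset.mem_attach _ _, hx⟩

private instance redei_noetherian (n : ℕ) :
    IsNoetherianRing (MonoidAlgebra ℤ (Multiplicative (Fin n →₀ ℕ))) :=
  isNoetherianRing_of_ringEquiv (MvPolynomial (Fin n) ℤ)
    (AddMonoidAlgebra.toMultiplicative ℤ (Fin n →₀ ℕ))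

end RedeiAux

/-- Rédei's theorem: every finitely generated commutative monoid is finitely presented. -/
theorem stmt_5 {M : Type*} [CommMonoid M]
    (hfg : ∃ s : Finset M, Submonoid.closure (s : Set M) = ⊤) :
    ∃ (n : ℕ) (π : Multiplicative (Fin n →₀ ℕ) →* M),
      Function.Surjective π ∧
      ∃ S : Finset (Multiplicative (Fin n →₀ ℕ) × Multiplicative (Fin n →₀ ℕ)),
        Con.ker π = conGen (fun x y => (x, y) ∈ S) := by
  classical
  obtain ⟨s, hs⟩ := hfg
  set n := s.card with hn
  set N := Multiplicative (Fin n →₀ ℕ) with hN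
  let g : Fin n → M := fun i => (s.equivFin.symm i : M)
  let πadd : (Fin n →₀ ℕ) →+ Additive M :=
    Finsupp.liftAddHom (fun i => multiplesHom (Additive M) (Additive.ofMul (g i)))
  let π : N →* M := AddMonoidHom.toMultiplicativeLeft πadd
  have hπg : ∀ i : Fin n, π (Multiplicative.ofAdd (Finsupp.single i 1)) = g i := by
    intro i
    show Additive.toMul (πadd (Finsupp.single i 1)) = g i
    rw [show πadd (Finsupp.single i 1)
        = multiplesHom (Additive M) (Additive.ofMul (g i)) 1 from
      Finsupp.liftAddHom_apply_single _ i 1]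
    simp [multiplesHom]
  have hsurj : Function.Surjective π := by
    rw [← MonoidHom.mrange_eq_top, eq_top_iff, ← hs, Submonoid.closure_le]
    intro x hx
    refine ⟨Multiplicative.ofAdd (Finsupp.single (s.equivFin ⟨x, hx⟩) 1), ?_⟩
    rw [hπg]
    show ((s.equivFin.symm (s.equivFin ⟨x, hx⟩)) : M) = x
    rw [Equiv.symm_apply_apply]
  -- the monoid algebra picture
  let φ := MonoidAlgebra.mapDomainRingHom (N := M) ℤ π
  let P : Set (N × N) := {q | π q.1 = π q.2}
  have hbinker : ∀ q : N × N, π q.1 = π q.2 → redeiBinom q ∈ RingHom.ker φ := by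
    rintro ⟨x, y⟩ hxy
    rw [RingHom.mem_ker]
    simp only [redeiBinom_def, map_sub, φ, MonoidAlgebra.mapDomainRingHom_apply,
      ZeroHom.toFun_eq_coe, AddMonoidHom.toZeroHom_coe, AddMonoidHom.coe_coe,
      AddMonoidHom.toFun_eq_coe, Finsupp.mapDomain.addMonoidHom_apply,
      Finsupp.mapDomain_single, MonoidAlgebra.mapDomain_single]
    rw [show π x = π y from hxy, sub_self]
  have hker : RingHom.ker φ = Ideal.span (redeiBinom '' P) := by
    apply le_antisymm
    · intro p hp
      rw [RingHom.mem_ker] at hp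
      exact redei_mem_span_aux π p.coeff.support.card p le_rfl (by
        have := congrArg MonoidAlgebra.coeff hp
        simpa only [φ, MonoidAlgebra.mapDomainRingHom_apply, MonoidAlgebra.coeff_mapDomain,
          MonoidAlgebra.coeff_zero] using this)
    · rw [Ideal.span_le]
      rintro _ ⟨⟨x, y⟩, hxy, rfl⟩
      exact hbinker (x, y) hxy
  have hfgker : (Ideal.span (redeiBinom '' P)).FG := by
    rw [← hker]
    exact IsNoetherian.noetherian _
  obtain ⟨T, hTsub, hTspan⟩ := redei_exists_finset_span (R := MonoidAlgebra ℤ N)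
    (redeiBinom '' P) hfgker
  have hT : ∀ t ∈ T, ∃ q : N × N, q ∈ P ∧ redeiBinom q = t := by
    intro t ht
    obtain ⟨q, hq, hq2⟩ := hTsub ht
    exact ⟨q, hq, hq2⟩
  choose pq hpq1 hpq2 using hT
  let S : Finset (N × N) := T.attach.image (fun t => pq t.1 t.2)
  refine ⟨n, π, hsurj, S, ?_⟩
  have hSP : ∀ q : N × N, q ∈ S → π q.1 = π q.2 := by
    intro q hq
    obtain ⟨t, ht, rfl⟩ := Finset.mem_image.mp hq
    exact hpq1 t t.2
  apply le_antisymm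
  · intro a b hab
    rw [Con.ker_rel] at hab
    have h1 : MonoidAlgebra.single a 1 - MonoidAlgebra.single b 1
        ∈ Ideal.span (redeiBinom '' {q : N × N | (q.1, q.2) ∈ S}) := by
      have h2 : (MonoidAlgebra.single a 1 - MonoidAlgebra.single b 1 : MonoidAlgebra ℤ N)
          ∈ Submodule.span (MonoidAlgebra ℤ N) (T : Set (MonoidAlgebra ℤ N)) := by
        rw [hTspan]
        have hmem2 := hbinker (a, b) hab
        rw [hker] at hmem2
        exact hmem2
      refine Submodule.span_le.mpr ?_ h2
      intro t ht
      rw [Finset.mem_coe] at ht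
      refine Submodule.subset_span ⟨pq t ht, ?_, hpq2 t ht⟩
      show ((pq t ht).1, (pq t ht).2) ∈ S
      rw [Prod.mk.eta]
      exact Finset.mem_image.mpr ⟨⟨t, ht⟩, Finset.mem_attach _ _, rfl⟩
    exact redei_conGen_of_mem_span (fun x y => (x, y) ∈ S) h1
  · refine Con.conGen_le.mpr fun x y hxy => ?_
    rw [Con.ker_rel]
    exact hSP (x, y) hxy
end

section
/- Let P be a type, P₀ a subset of P, and consider the free commutative monoid K = P →₀ ℕ under pointwise addition. Let S be a set of pairs (T, T') of elements of K such that every T and T' occurring in S is supported inside P₀. Let c be the additive congruence on K generated by S. For x ∈ K write x↾P₀ for the element of K agreeing with x on P₀ and equal to 0 outside P₀, and x↾P₀ᶜ for the element agreeing with x outside P₀ and equal to 0 on P₀. Then for all x, y ∈ K: c x y holds if and only if x↾P₀ᶜ = y↾P₀ᶜ and c (x↾P₀) (y↾P₀). -/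
/-- Degree-1 skein invariants: for a set `S` of pairs of elements of the free commutative
monoid `P →₀ ℕ` supported inside `P₀`, the generated additive congruence relates `x` and `y`
iff they agree outside `P₀` and their `P₀`-parts are related. -/
theorem stmt_6 {P : Type*} (P₀ : Set P) [DecidablePred (· ∈ P₀)]
    (S : Set ((P →₀ ℕ) × (P →₀ ℕ)))
    (hS : ∀ p ∈ S, (↑p.1.support : Set P) ⊆ P₀ ∧ (↑p.2.support : Set P) ⊆ P₀)
    (c : AddCon (P →₀ ℕ)) (hc : c = addConGen (fun x y => (x, y) ∈ S)) :
    ∀ x y : P →₀ ℕ,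
      c x y ↔
        (x.filter (fun p => p ∉ P₀) = y.filter (fun p => p ∉ P₀)) ∧
        c (x.filter (fun p => p ∈ P₀)) (y.filter (fun p => p ∈ P₀)) := by
  subst hc
  intro x y
  constructor
  · intro h
    induction h with
    | of a b hab =>
      obtain ⟨h1, h2⟩ := hS _ hab
      have e1 : a.filter (fun p => p ∉ P₀) = 0 := by
        rw [Finsupp.filter_eq_zero_iff]
        intro p hp
        by_contra hfa
        exact hp (h1 (Finsupp.mem_support_iff.2 hfa))
      have e2 : b.filter (fun p => p ∉ P₀) = 0 := by
        rw [Finsupp.filter_eq_zero_iff]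
        intro p hp
        by_contra hfb
        exact hp (h2 (Finsupp.mem_support_iff.2 hfb))
      have e3 : a.filter (fun p => p ∈ P₀) = a := by
        rw [Finsupp.filter_eq_self_iff]
        intro p hp
        exact h1 (Finsupp.mem_support_iff.2 hp)
      have e4 : b.filter (fun p => p ∈ P₀) = b := by
        rw [Finsupp.filter_eq_self_iff]
        intro p hp
        exact h2 (Finsupp.mem_support_iff.2 hp)
      refine ⟨e1.trans e2.symm, ?_⟩
      rw [e3, e4]
      exact AddConGen.Rel.of _ _ hab
    | refl a => exact ⟨rfl, AddConGen.Rel.refl _⟩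
    | symm _ ih => exact ⟨ih.1.symm, AddConGen.Rel.symm ih.2⟩
    | trans _ _ ih1 ih2 => exact ⟨ih1.1.trans ih2.1, AddConGen.Rel.trans ih1.2 ih2.2⟩
    | add _ _ ih1 ih2 =>
      refine ⟨?_, ?_⟩
      · simp only [Finsupp.filter_add, ih1.1, ih2.1]
      · simp only [Finsupp.filter_add]
        exact AddConGen.Rel.add ih1.2 ih2.2
  · rintro ⟨h1, h2⟩
    have hx := Finsupp.filter_pos_add_filter_neg x (fun p => p ∈ P₀)
    have hy := Finsupp.filter_pos_add_filter_neg y (fun p => p ∈ P₀)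
    have h3 : (addConGen fun x y => (x, y) ∈ S)
        (x.filter (fun p => p ∈ P₀) + x.filter (fun p => p ∉ P₀))
        (y.filter (fun p => p ∈ P₀) + y.filter (fun p => p ∉ P₀)) := by
      rw [h1]
      exact AddConGen.Rel.add h2 (AddConGen.Rel.refl _)
    rwa [hx, hy] at h3
end

section
/- Let K be a type and r₀, r' : K → K → Prop two relations, with projections p₀ : K → Quotient (EqvGen r₀) and p' : K → Quotient (EqvGen r'). Suppose there exists a map f : Quotient (EqvGen r') → Quotient (EqvGen r₀) with p₀ = f ∘ p'. Define r : K → K → Prop by r a b ↔ (r₀ a b ∨ r' a b). Then EqvGen r = EqvGen r₀, and r' ≤ EqvGen r (every pair related by r' is related by EqvGen r). -/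
/-- Partial order on skein invariants, part 2: if `I_{r₀}` factors through `I_{r'}`, then the
union `r = r₀ ∪ r'` generates the same equivalence relation as `r₀`, and `r'` is finer than
`r`. -/
theorem stmt_8 {K : Type*} (r₀ r' : K → K → Prop)
    (f : Quotient (Relation.EqvGen.setoid r') → Quotient (Relation.EqvGen.setoid r₀))
    (hf : Quotient.mk (Relation.EqvGen.setoid r₀) =
      f ∘ Quotient.mk (Relation.EqvGen.setoid r'))
    (r : K → K → Prop) (hr : ∀ a b : K, r a b ↔ (r₀ a b ∨ r' a b)) :
    Relation.EqvGen r = Relation.EqvGen r₀ ∧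
    (∀ a b : K, r' a b → Relation.EqvGen r a b) := by
  have key : ∀ a b : K, r' a b → Relation.EqvGen r₀ a b := by
    intro a b h
    have h' : Quotient.mk (Relation.EqvGen.setoid r') a =
        Quotient.mk (Relation.EqvGen.setoid r') b :=
      Quotient.sound (Relation.EqvGen.rel a b h)
    have h0 : Quotient.mk (Relation.EqvGen.setoid r₀) a =
        Quotient.mk (Relation.EqvGen.setoid r₀) b := by
      rw [hf]; simp only [Function.comp_apply, h']
    exact Quotient.exact h0
  constructor
  · ext a b
    constructor
    · intro h
      induction h with
      | rel a b hab =>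
        rcases (hr a b).1 hab with h0 | h1
        · exact Relation.EqvGen.rel a b h0
        · exact key a b h1
      | refl a => exact Relation.EqvGen.refl a
      | symm a b _ ih => exact Relation.EqvGen.symm a b ih
      | trans a b c _ _ ih1 ih2 => exact Relation.EqvGen.trans a b c ih1 ih2
    · intro h
      exact Relation.EqvGen.mono (fun a b h0 => (hr a b).2 (Or.inl h0)) a b h
  · intro a b h
    exact Relation.EqvGen.rel a b ((hr a b).2 (Or.inr h))
end

section
/- Let K be a type and r : K → K → Prop a relation. Suppose there exist x, y, z ∈ K pairwise non-equivalent under EqvGen r (i.e., ¬ EqvGen r x y, ¬ EqvGen r x z, ¬ EqvGen r y z). Define r' : K → K → Prop by r' a b ↔ (r a b ∨ (a = x ∧ b = y)). Then EqvGen r ≤ EqvGen r', EqvGen r' x y holds while EqvGen r x y does not (so the inclusion is strict), and ¬ EqvGen r' x z (so EqvGen r' is not the total relation). -/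
/-- If the skein invariant induced by `r` takes at least three values (witnessed by pairwise
non-equivalent `x, y, z`), then adding the single move `(x, y)` yields a strictly weaker yet
nontrivial skein invariant. -/
theorem stmt_10 {K : Type*} (r : K → K → Prop) (x y z : K)
    (hxy : ¬ Relation.EqvGen r x y) (hxz : ¬ Relation.EqvGen r x z)
    (hyz : ¬ Relation.EqvGen r y z)
    (r' : K → K → Prop) (hr' : ∀ a b : K, r' a b ↔ (r a b ∨ (a = x ∧ b = y))) :
    (∀ a b : K, Relation.EqvGen r a b → Relation.EqvGen r' a b) ∧
    Relation.EqvGen r' x y ∧ ¬ Relation.EqvGen r x y ∧ ¬ Relation.EqvGen r' x z := by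
  have hmono : ∀ a b : K, Relation.EqvGen r a b → Relation.EqvGen r' a b := by
    intro a b h
    induction h with
    | rel a b h => exact Relation.EqvGen.rel _ _ ((hr' a b).mpr (Or.inl h))
    | refl a => exact Relation.EqvGen.refl a
    | symm a b _ ih => exact ih.symm
    | trans a b c _ _ ih1 ih2 => exact ih1.trans _ _ _ ih2
  have hxy' : Relation.EqvGen r' x y :=
    Relation.EqvGen.rel _ _ ((hr' x y).mpr (Or.inr ⟨rfl, rfl⟩))
  refine ⟨hmono, hxy', hxy, ?_⟩
  -- characterize EqvGen r'
  set E := Relation.EqvGen r with hE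
  have key : ∀ a b : K, Relation.EqvGen r' a b →
      E a b ∨ (E a x ∧ E y b) ∨ (E a y ∧ E x b) := by
    intro a b h
    induction h with
    | rel a b h =>
      rcases (hr' a b).mp h with h | ⟨rfl, rfl⟩
      · exact Or.inl (Relation.EqvGen.rel _ _ h)
      · exact Or.inr (Or.inl ⟨Relation.EqvGen.refl _, Relation.EqvGen.refl _⟩)
    | refl a => exact Or.inl (Relation.EqvGen.refl a)
    | symm a b _ ih =>
      rcases ih with h | ⟨h1, h2⟩ | ⟨h1, h2⟩
      · exact Or.inl h.symm
      · exact Or.inr (Or.inr ⟨h2.symm, h1.symm⟩)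
      · exact Or.inr (Or.inl ⟨h2.symm, h1.symm⟩)
    | trans a b c _ _ ih1 ih2 =>
      rcases ih1 with h | ⟨h1, h2⟩ | ⟨h1, h2⟩ <;>
        rcases ih2 with g | ⟨g1, g2⟩ | ⟨g1, g2⟩
      · exact Or.inl (h.trans _ _ _ g)
      · exact Or.inr (Or.inl ⟨h.trans _ _ _ g1, g2⟩)
      · exact Or.inr (Or.inr ⟨h.trans _ _ _ g1, g2⟩)
      · exact Or.inr (Or.inl ⟨h1, h2.trans _ _ _ g⟩)
      · exact absurd ((h2.trans _ _ _ g1).symm) hxy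
      · exact Or.inl (h1.trans _ _ _ g2)
      · exact Or.inr (Or.inr ⟨h1, h2.trans _ _ _ g⟩)
      · exact Or.inl (h1.trans _ _ _ g2)
      · exact absurd (h2.trans _ _ _ g1) hxy
  intro h
  rcases key x z h with h | ⟨h1, h2⟩ | ⟨h1, h2⟩
  · exact hxz h
  · exact hyz h2
  · exact hxy h1
end

section
/- Let K be a type, s an equivalence relation (Setoid) on K, and x, y ∈ K with ¬ s x y. Let s' be the smallest equivalence relation containing s and relating x to y. If the quotient K/s is finite, then the cardinality of the quotient K/s' equals the cardinality of K/s minus one: Nat.card (Quotient s') + 1 = Nat.card (Quotient s). -/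
section Aux

variable {K : Type*} (s : Setoid K) (x y : K)

private lemma eqvGen_char (hxy : ¬ s x y) (a b : K)
    (h : Relation.EqvGen (fun a b => s a b ∨ (a = x ∧ b = y)) a b) :
    s a b ∨ (s a x ∧ s y b) ∨ (s a y ∧ s x b) := by
  induction h with
  | rel a b h =>
    rcases h with h | ⟨rfl, rfl⟩
    · exact Or.inl h
    · exact Or.inr (Or.inl ⟨s.refl _, s.refl _⟩)
  | refl a => exact Or.inl (s.refl _)
  | symm a b _ ih =>
    rcases ih with h | ⟨h1, h2⟩ | ⟨h1, h2⟩
    · exact Or.inl (s.symm h)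
    · exact Or.inr (Or.inr ⟨s.symm h2, s.symm h1⟩)
    · exact Or.inr (Or.inl ⟨s.symm h2, s.symm h1⟩)
  | trans a b c _ _ ih1 ih2 =>
    rcases ih1 with h | ⟨h1, h2⟩ | ⟨h1, h2⟩ <;>
      rcases ih2 with g | ⟨g1, g2⟩ | ⟨g1, g2⟩
    · exact Or.inl (s.trans h g)
    · exact Or.inr (Or.inl ⟨s.trans h g1, g2⟩)
    · exact Or.inr (Or.inr ⟨s.trans h g1, g2⟩)
    · exact Or.inr (Or.inl ⟨h1, s.trans h2 g⟩)
    · exact absurd (s.symm (s.trans h2 g1)) hxy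
    · exact Or.inl (s.trans h1 g2)
    · exact Or.inr (Or.inr ⟨h1, s.trans h2 g⟩)
    · exact Or.inl (s.trans h1 g2)
    · exact absurd (s.trans h2 g1) hxy

end Aux

/-- Counting step for binary skein invariants: adding a single pair `(x, y)` of non-equivalent
elements to an equivalence relation with finite quotient decreases the number of classes by
exactly one. -/
theorem stmt_11 {K : Type*} (s : Setoid K) (x y : K) (hxy : ¬ s x y)
    (hfin : Finite (Quotient s)) :
    Nat.card (Quotient (Relation.EqvGen.setoid
        (fun a b => s a b ∨ (a = x ∧ b = y)))) + 1 = Nat.card (Quotient s) := by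
  classical
  set s' := Relation.EqvGen.setoid (fun a b => s a b ∨ (a = x ∧ b = y)) with hs'
  -- the canonical surjection
  let g : Quotient s → Quotient s' :=
    Quotient.map id (fun a b h => Relation.EqvGen.rel _ _ (Or.inl h))
  have hxne : (Quotient.mk s x) ≠ Quotient.mk s y := fun h => hxy (Quotient.exact h)
  have hbij : Function.Bijective
      (fun c : {c : Quotient s // c ≠ Quotient.mk s y} => g c.1) := by
    constructor
    · rintro ⟨c, hc⟩ ⟨d, hd⟩ h
      induction c using Quotient.ind with | _ a =>
      induction d using Quotient.ind with | _ b =>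
      simp only [g] at h
      have h' : Relation.EqvGen (fun a b => s a b ∨ (a = x ∧ b = y)) a b :=
        Quotient.exact h
      rcases eqvGen_char s x y hxy a b h' with h0 | ⟨h1, h2⟩ | ⟨h1, h2⟩
      · exact Subtype.ext (Quotient.sound h0)
      · exact absurd (Quotient.sound (s.symm h2)) hd
      · exact absurd (Quotient.sound h1) hc
    · intro q
      obtain ⟨a, rfl⟩ := Quotient.exists_rep q
      by_cases ha : s a y
      · refine ⟨⟨Quotient.mk s x, hxne⟩, ?_⟩
        refine Quotient.sound ?_
        exact Relation.EqvGen.trans x y a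
          (Relation.EqvGen.rel x y (Or.inr ⟨rfl, rfl⟩))
          (Relation.EqvGen.symm a y (Relation.EqvGen.rel a y (Or.inl ha)))
      · exact ⟨⟨Quotient.mk s a, fun h => ha (Quotient.exact h)⟩, rfl⟩

  have hcard : Nat.card (Quotient s') =
      Nat.card {c : Quotient s // c ≠ Quotient.mk s y} :=
    (Nat.card_eq_of_bijective _ hbij).symm
  rw [hcard]
  haveI := Fintype.ofFinite (Quotient s)
  rw [Nat.card_eq_fintype_card, Nat.card_eq_fintype_card]
  have h1 := Fintype.card_subtype_compl (fun c : Quotient s => c = Quotient.mk s y)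
  simp only [Fintype.card_subtype_eq] at h1
  have h2 : Fintype.card {c : Quotient s // c ≠ Quotient.mk s y} =
      Fintype.card (Quotient s) - 1 := h1
  have hpos : 1 ≤ Fintype.card (Quotient s) :=
    Fintype.card_pos_iff.mpr ⟨Quotient.mk s y⟩
  omega
end
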